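/- Let G be a finite simple graph of girth at least 6, let v be a vertex of G, let q be a positive integer, and let c ≥ 2q be an integer. For each t ∈ {q+1,…,c} define μ_t : V(G)×{1,…,q} → {1,…,c} by: μ_t(g,i) = i if dist(v,g) ∈ {0,2}; μ_t(g,i) = q+i if dist(v,g) = 1; and μ_t(g,i) = t if dist(v,g) ≥ 3. Then the mappings μ_{q+1},…,μ_c are pairwise distinct and form a clique of size c − q in the exponential graph E_c(G ⊠ K_q). -/

import Mathlib

/-- The exponential graph `E_c(Γ)` of a graph `Γ` (possibly with loops), given by a
symmetric adjacency relation `E` on the vertex set `V`. -/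
def expGraph {V : Type} (E : V → V → Prop) (hE : Symmetric E) (c : ℕ) :
    SimpleGraph (V → Fin c) where
  Adj φ ψ := φ ≠ ψ ∧ ∀ x y, E x y → φ x ≠ ψ y
  symm := by
    refine ⟨?_⟩
    rintro φ ψ ⟨hne, h⟩
    exact ⟨hne.symm, fun x y hxy heq => h y x (hE hxy) heq.symm⟩
  loopless := ⟨fun φ h => h.1 rfl⟩

/-- The strong product `G ⊠ K_q`. -/
def strongProdK {α : Type} (G : SimpleGraph α) (q : ℕ) : SimpleGraph (α × Fin q) where
  Adj p r := G.Adj p.1 r.1 ∨ (p.1 = r.1 ∧ p.2 ≠ r.2)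
  symm := by
    refine ⟨?_⟩
    rintro p r (h | ⟨h1, h2⟩)
    · exact Or.inl h.symm
    · exact Or.inr ⟨h1.symm, h2.symm⟩
  loopless := by
    refine ⟨?_⟩
    rintro p (h | ⟨-, h2⟩)
    · exact G.loopless.irrefl p.1 h
    · exact h2 rfl

/-- The mapping `μ_t : V(G) × {1,…,q} → {1,…,c}` (0-indexed): `μ_t (g,i) = i` if
`dist(v,g) ∈ {0,2}`, `μ_t (g,i) = q + i` if `dist(v,g) = 1`, and `μ_t (g,i) = t` if
`dist(v,g) ≥ 3` (distance measured by `edist`, so unreachable vertices also get `t`). -/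
noncomputable def mu {α : Type} (G : SimpleGraph α) (v : α) (q c : ℕ) (hc : 2 * q ≤ c)
    (t : Fin c) : α × Fin q → Fin c := fun p =>
  if G.edist v p.1 = 0 ∨ G.edist v p.1 = 2 then ⟨p.2.val, by have := p.2.isLt; omega⟩
  else if G.edist v p.1 = 1 then ⟨q + p.2.val, by have := p.2.isLt; omega⟩
  else t

section Helpers
open SimpleGraph

lemma enat_le_two_cases (n : ℕ∞) (h : n ≤ 2) : n = 0 ∨ n = 1 ∨ n = 2 := by
  lift n to ℕ using ne_top_of_le_ne_top (by simp) h
  norm_cast at h ⊢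
  omega

lemma edist_step {α : Type} (G : SimpleGraph α) {v g h : α} (hgh : G.Adj g h) :
    G.edist v h ≤ G.edist v g + 1 := by
  calc G.edist v h ≤ G.edist v g + G.edist g h := SimpleGraph.edist_triangle
    _ = G.edist v g + 1 := by rw [edist_eq_one_iff_adj.mpr hgh]

lemma no_triangle {α : Type} {G : SimpleGraph α} (hg : 6 ≤ G.egirth) {a b c : α}
    (hab : G.Adj a b) (hbc : G.Adj b c) (hca : G.Adj c a) : False := by
  have hcyc : (Walk.cons hab (Walk.cons hbc (Walk.cons hca Walk.nil))).IsCycle := by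
    rw [Walk.cons_isCycle_iff]
    constructor
    · rw [Walk.isPath_def]
      simp [hbc.ne, hbc.ne', hca.ne, hca.ne', hab.ne, hab.ne']
    · simp [Sym2.eq_iff, hbc.ne, hbc.ne', hca.ne, hca.ne', hab.ne, hab.ne']
  have := le_egirth.mp hg _ _ hcyc
  simp at this
  norm_num at this

lemma exists_mid {α : Type} {G : SimpleGraph α} {v g : α} (h : G.edist v g = 2) :
    ∃ a, G.Adj v a ∧ G.Adj a g := by
  obtain ⟨p, hp⟩ := exists_walk_of_edist_eq_coe (k := 2) (by exact_mod_cast h)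
  match p, hp with
  | .cons h1 (.cons h2 .nil), _ => exact ⟨_, h1, h2⟩

lemma no_pentagon {α : Type} {G : SimpleGraph α} (hg : 6 ≤ G.egirth) {v a g h b : α}
    (hva : G.Adj v a) (hag : G.Adj a g) (hgh : G.Adj g h) (hhb : G.Adj h b) (hbv : G.Adj b v)
    (hvg : v ≠ g) (hvh : v ≠ h) (hah : a ≠ h) (hab : a ≠ b) (hgb : g ≠ b) : False := by
  have hcyc : (Walk.cons hva (Walk.cons hag (Walk.cons hgh (Walk.cons hhb
      (Walk.cons hbv Walk.nil))))).IsCycle := by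
    rw [Walk.cons_isCycle_iff]
    constructor
    · rw [Walk.isPath_def]
      simp [hag.ne, hah, hab, hva.ne', hgh.ne, hgb, hvg.symm, hhb.ne, hvh.symm, hbv.ne]
    · simp [Sym2.eq_iff, hvg, hvh, hab, hva.ne, hva.ne', hbv.ne', hah]
  have := le_egirth.mp hg _ _ hcyc
  simp at this
  norm_num at this

open SimpleGraph in
lemma mu_val0 {α : Type} (G : SimpleGraph α) (v : α) (q c : ℕ) (hc : 2 * q ≤ c)
    (u : Fin c) (g : α) (i : Fin q) (h : G.edist v g = 0 ∨ G.edist v g = 2) :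
    (mu G v q c hc u (g, i)).val = i.val := by
  unfold mu; rw [if_pos h]

open SimpleGraph in
lemma mu_val1 {α : Type} (G : SimpleGraph α) (v : α) (q c : ℕ) (hc : 2 * q ≤ c)
    (u : Fin c) (g : α) (i : Fin q) (h : G.edist v g = 1) :
    (mu G v q c hc u (g, i)).val = q + i.val := by
  unfold mu
  rw [if_neg (by simp [h]), if_pos h]

open SimpleGraph in
lemma mu_val2 {α : Type} (G : SimpleGraph α) (v : α) (q c : ℕ) (hc : 2 * q ≤ c)
    (u : Fin c) (g : α) (i : Fin q) (h : 3 ≤ G.edist v g) :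
    mu G v q c hc u (g, i) = u := by
  have h0 : G.edist v g ≠ 0 := fun e => by rw [e] at h; norm_num at h
  have h1 : G.edist v g ≠ 1 := fun e => by rw [e] at h; norm_num at h
  have h2 : G.edist v g ≠ 2 := fun e => by rw [e] at h; norm_num at h
  unfold mu
  rw [if_neg (by tauto), if_neg h1]

open SimpleGraph in
lemma edist_tri {α : Type} (G : SimpleGraph α) (v g : α) :
    (G.edist v g = 0 ∨ G.edist v g = 2) ∨ G.edist v g = 1 ∨ 3 ≤ G.edist v g := by
  by_cases h : 3 ≤ G.edist v g
  · tauto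
  · have h' : G.edist v g < 3 := not_le.mp h
    have hne : G.edist v g ≠ ⊤ := fun e => by rw [e] at h'; exact absurd h' (by simp)
    lift G.edist v g to ℕ using hne with n hn
    norm_cast at h' ⊢
    omega

open SimpleGraph in
lemma mu_key {α : Type} (G : SimpleGraph α) (hg : 6 ≤ G.egirth) (v : α) (q c : ℕ)
    (hc : 2 * q ≤ c) (t s : Fin c) (ht : q ≤ t.val) (hs : q ≤ s.val) (hts : t ≠ s)
    (x y : α × Fin q) (hadj : (strongProdK G q).Adj x y) :
    mu G v q c hc t x ≠ mu G v q c hc s y := by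
  obtain ⟨g, i⟩ := x
  obtain ⟨h, j⟩ := y
  replace hadj : G.Adj g h ∨ (g = h ∧ i ≠ j) := hadj
  have hvalne : ∀ {i' j' : Fin q}, i' ≠ j' → i'.val ≠ j'.val :=
    fun hij e => hij (Fin.ext e)
  rcases edist_tri G v g with h1 | h1 | h1 <;> rcases edist_tri G v h with h2 | h2 | h2
  · -- both in {0,2}
    rcases hadj with hgh | ⟨rfl, hij⟩
    · exfalso
      rcases h1 with e0 | e2 <;> rcases h2 with f0 | f2
      · exact G.loopless.irrefl v
          (by rwa [← edist_eq_zero_iff.mp e0, ← edist_eq_zero_iff.mp f0] at hgh)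
      · rw [edist_eq_one_iff_adj.mpr (edist_eq_zero_iff.mp e0 ▸ hgh)] at f2
        norm_num at f2
      · rw [edist_eq_one_iff_adj.mpr (edist_eq_zero_iff.mp f0 ▸ hgh.symm)] at e2
        norm_num at e2
      · obtain ⟨a, hva, hag⟩ := exists_mid e2
        obtain ⟨b, hvb, hbh⟩ := exists_mid f2
        have hvg : v ≠ g := fun e => by rw [← e, SimpleGraph.edist_self] at e2; norm_num at e2
        have hvh : v ≠ h := fun e => by rw [← e, SimpleGraph.edist_self] at f2; norm_num at f2
        have hah : a ≠ h := fun e => by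
          rw [← e, edist_eq_one_iff_adj.mpr hva] at f2; norm_num at f2
        have hgb : g ≠ b := fun e => by
          rw [e, edist_eq_one_iff_adj.mpr hvb] at e2; norm_num at e2
        by_cases hab : a = b
        · subst hab
          exact no_triangle hg hag hgh (hbh.symm)
        · exact no_pentagon hg hva hag hgh hbh.symm hvb.symm hvg hvh hah hab hgb
    · intro e
      have := congrArg Fin.val e
      rw [mu_val0 G v q c hc t g i h1, mu_val0 G v q c hc s g j h2] at this
      exact hvalne hij this
  · intro e
    have := congrArg Fin.val e
    rw [mu_val0 G v q c hc t g i h1, mu_val1 G v q c hc s h j h2] at this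
    have := i.isLt; omega
  · intro e
    rw [mu_val2 G v q c hc s h j h2] at e
    have := congrArg Fin.val e
    rw [mu_val0 G v q c hc t g i h1] at this
    have := i.isLt; omega
  · intro e
    have := congrArg Fin.val e
    rw [mu_val1 G v q c hc t g i h1, mu_val0 G v q c hc s h j h2] at this
    have := j.isLt; omega
  · rcases hadj with hgh | ⟨rfl, hij⟩
    · exact absurd (no_triangle hg (edist_eq_one_iff_adj.mp h1) hgh
        (edist_eq_one_iff_adj.mp h2).symm) id
    · intro e
      have := congrArg Fin.val e
      rw [mu_val1 G v q c hc t g i h1, mu_val1 G v q c hc s g j h2] at this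
      exact hvalne hij (by omega)
  · exfalso
    rcases hadj with hgh | ⟨rfl, hij⟩
    · have : G.edist v h ≤ 2 := by
        calc G.edist v h ≤ G.edist v g + 1 := edist_step G hgh
          _ = 2 := by rw [h1]; norm_num
      have := h2.trans this
      norm_num at this
    · rw [h1] at h2; norm_num at h2
  · intro e
    rw [mu_val2 G v q c hc t g i h1] at e
    have := congrArg Fin.val e
    rw [mu_val0 G v q c hc s h j h2] at this
    have := j.isLt; omega
  · exfalso
    rcases hadj with hgh | ⟨rfl, hij⟩
    · have : G.edist v g ≤ 2 := by
        calc G.edist v g ≤ G.edist v h + 1 := edist_step G hgh.symm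
          _ = 2 := by rw [h2]; norm_num
      have := h1.trans this
      norm_num at this
    · rw [h2] at h1; norm_num at h1
  · rw [mu_val2 G v q c hc t g i h1, mu_val2 G v q c hc s h j h2]
    exact hts

end Helpers

/-- For a finite simple graph `G` of girth at least `6`, a vertex `v`, `0 < q`,
`2q ≤ c`, and provided some vertex is at distance at least `3` from `v`, the mappings
`μ_t` for `t ∈ {q+1,…,c}` (0-indexed: `q ≤ t`) are pairwise distinct and form a clique
of size `c − q` in `E_c(G ⊠ K_q)`. -/
theorem mu_clique {α : Type} [Fintype α] (G : SimpleGraph α)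
    (hg : 6 ≤ G.egirth) (v : α) (q c : ℕ) (hq : 0 < q) (hc : 2 * q ≤ c)
    (hfar : ∃ g : α, 3 ≤ G.edist v g) :
    Set.InjOn (mu G v q c hc) {t : Fin c | q ≤ t.val} ∧
      (expGraph (strongProdK G q).Adj (fun _ _ h => h.symm) c).IsClique
        (mu G v q c hc '' {t : Fin c | q ≤ t.val}) := by
  obtain ⟨g0, hg0⟩ := hfar
  have inj : Set.InjOn (mu G v q c hc) {t : Fin c | q ≤ t.val} := by
    intro t ht s hs he
    have := congrFun he (g0, ⟨0, hq⟩)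
    rwa [mu_val2 G v q c hc t g0 ⟨0, hq⟩ hg0, mu_val2 G v q c hc s g0 ⟨0, hq⟩ hg0] at this
  refine ⟨inj, ?_⟩
  rintro φ ⟨t, ht, rfl⟩ ψ ⟨s, hs, rfl⟩ hne
  have hts : t ≠ s := fun e => hne (by rw [e])
  exact ⟨hne, fun x y hxy => mu_key G hg v q c hc t s ht hs hts x y hxy⟩
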